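/- arXiv:1509.01917 — 4 statements merged into one kernel-verified Lean document; each statement's English description precedes it below -/
import Mathlib

section
/- Let k > 0, ρ > 0, C_f ≥ 0, let A₀ : ℝ → ℝ be differentiable with A₀ > 0, and let A, Q : ℝ → ℝ be differentiable stationary solutions with A > 0, i.e. Q′(x) = 0 and d/dx(Q(x)²/A(x) + (k/(3ρ√π)) A(x)^{3/2}) = (A(x)/(ρ√π)) · d/dx(k√A₀(x)) − C_f Q(x)/A(x) for all x. Then, with b = k/(ρ√π), the function E(x) = Q(x)²/(2A(x)²) + b√A(x) − b√A₀(x) satisfies E′(x) = −C_f Q(x)/A(x)² for all x. -/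
open Real

/-!
For a constant discharge `Q`, the momentum flux `Q²/A + (b/3) A^{3/2}` and the Bernoulli head
`Q²/(2A²) + b√A` satisfy `(Q²/A + (b/3) A^{3/2})' = A · (Q²/(2A²) + b√A)'`. Dividing the
stationary momentum equation by `A > 0` therefore turns it into `E' = −C_f Q/A²`.
-/

namespace BloodFlow

noncomputable def bernoulliHead (b : ℝ) (Q A : ℝ → ℝ) (y : ℝ) : ℝ :=
  Q y ^ 2 / (2 * A y ^ 2) + b * √(A y)

noncomputable def momentumFlux (b : ℝ) (Q A : ℝ → ℝ) (y : ℝ) : ℝ :=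
  Q y ^ 2 / A y + b / 3 * A y ^ (3 / 2 : ℝ)

variable (b : ℝ) {Q A : ℝ → ℝ} {a x : ℝ}

theorem hasDerivAt_bernoulliHead (hQ : HasDerivAt Q 0 x) (hA : HasDerivAt A a x)
    (hAx : A x ≠ 0) :
    HasDerivAt (bernoulliHead b Q A) (-(Q x ^ 2 * a / A x ^ 3) + b * (a / (2 * √(A x)))) x := by
  have hkinetic : HasDerivAt (fun y => Q y ^ 2 / (2 * A y ^ 2)) (-(Q x ^ 2 * a / A x ^ 3)) x := by
    refine ((hQ.fun_pow 2).div ((hA.fun_pow 2).const_mul 2) (by positivity)).congr_deriv ?_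
    field_simp
    ring
  exact hkinetic.add ((hA.sqrt hAx).const_mul b)

theorem hasDerivAt_momentumFlux (hQ : HasDerivAt Q 0 x) (hA : HasDerivAt A a x)
    (hAx : 0 < A x) :
    HasDerivAt (momentumFlux b Q A)
      (A x * (-(Q x ^ 2 * a / A x ^ 3) + b * (a / (2 * √(A x))))) x := by
  have hrpow : A x ^ ((3 / 2 : ℝ) - 1) = √(A x) := by
    rw [sqrt_eq_rpow]
    norm_num
  have hsqrt : √(A x) ^ 2 = A x := sq_sqrt hAx.le
  have hsqrt_pos : 0 < √(A x) := sqrt_pos.mpr hAx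
  refine (((hQ.fun_pow 2).div hA hAx.ne').add
    ((hA.rpow_const (p := 3 / 2) (Or.inl hAx.ne')).const_mul (b / 3))).congr_deriv ?_
  rw [hrpow]
  field_simp
  linear_combination (a * A x ^ 2 * b) * hsqrt

end BloodFlow

open BloodFlow in
theorem blood_flow_stationary_energy_dissipation_general
    (k ρ C_f : ℝ)
    (A₀ A Q : ℝ → ℝ)
    (hA₀ : Differentiable ℝ A₀) (hA₀pos : ∀ x, 0 < A₀ x)
    (hA : Differentiable ℝ A) (hQ : Differentiable ℝ Q)
    (hApos : ∀ x, 0 < A x)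
    (hQconst : ∀ x, deriv Q x = 0)
    (hmom : ∀ x, deriv (fun y => Q y ^ 2 / A y +
        k / (3 * ρ * Real.sqrt π) * A y ^ (3 / 2 : ℝ)) x =
        A x / (ρ * Real.sqrt π) * deriv (fun y => k * Real.sqrt (A₀ y)) x
          - C_f * Q x / A x) :
    ∀ x, deriv (fun y => Q y ^ 2 / (2 * A y ^ 2) +
        k / (ρ * Real.sqrt π) * Real.sqrt (A y)
          - k / (ρ * Real.sqrt π) * Real.sqrt (A₀ y)) x
      = -(C_f * Q x / A x ^ 2) := by
  intro x
  have hQ0 : HasDerivAt Q 0 x := hQconst x ▸ (hQ x).hasDerivAt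
  have hflux : (fun y => Q y ^ 2 / A y + k / (3 * ρ * √π) * A y ^ (3 / 2 : ℝ))
      = momentumFlux (k / (ρ * √π)) Q A := by
    funext y
    simp only [momentumFlux]
    ring
  have hpotential := (hA₀ x).hasDerivAt.sqrt (hA₀pos x).ne'
  have hmomx := hmom x
  rw [hflux, (hasDerivAt_momentumFlux _ hQ0 (hA x).hasDerivAt (hApos x)).deriv,
    (hpotential.const_mul k).deriv] at hmomx
  have hAx := (hApos x).ne'
  refine ((hasDerivAt_bernoulliHead _ hQ0 (hA x).hasDerivAt hAx).sub
    (hpotential.const_mul _)).deriv.trans ?_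
  field_simp at hmomx ⊢
  linear_combination hmomx

/-- For stationary solutions of the constant-stiffness blood flow system, the Bernoulli
quantity `E = Q²/(2A²) + b√A − b√A₀` satisfies `E' = −C_f Q/A²`, with `b = k/(ρ√π)`. -/
theorem blood_flow_stationary_energy_dissipation
    (k ρ C_f : ℝ) (hk : 0 < k) (hρ : 0 < ρ) (hCf : 0 ≤ C_f)
    (A₀ A Q : ℝ → ℝ)
    (hA₀ : Differentiable ℝ A₀) (hA₀pos : ∀ x, 0 < A₀ x)
    (hA : Differentiable ℝ A) (hQ : Differentiable ℝ Q)
    (hApos : ∀ x, 0 < A x)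
    (hQconst : ∀ x, deriv Q x = 0)
    (hmom : ∀ x, deriv (fun y => Q y ^ 2 / A y +
        k / (3 * ρ * Real.sqrt π) * A y ^ (3 / 2 : ℝ)) x =
        A x / (ρ * Real.sqrt π) * deriv (fun y => k * Real.sqrt (A₀ y)) x
          - C_f * Q x / A x) :
    ∀ x, deriv (fun y => Q y ^ 2 / (2 * A y ^ 2) +
        k / (ρ * Real.sqrt π) * Real.sqrt (A y)
          - k / (ρ * Real.sqrt π) * Real.sqrt (A₀ y)) x
      = -(C_f * Q x / A x ^ 2) :=
  blood_flow_stationary_energy_dissipation_general k ρ C_f A₀ A Q hA₀ hA₀pos hA hQ hApos hQconst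
    hmom
end

section
/- Let ρ > 0, C_f ≥ 0, let k, A₀ : ℝ → ℝ be continuously differentiable with k > 0 and A₀ > 0, and let A : ℝ → ℝ be continuously differentiable with A > 0 such that k(x)√A(x) − k(x)√A₀(x) is constant in x ('man at eternal rest' equilibrium). Then the time-independent pair (A(x), Q ≡ 0) is an exact solution of the variable-stiffness blood flow system: ∂ₜA + ∂ₓQ = 0 and ∂ₓ((k(x)/(3√π ρ))A^{3/2}) = (A/(√π ρ))(∂ₓ(k√A₀) − (2/3)√A ∂ₓk). -/
/-!
At rest (`Q ≡ 0`) the mass equation holds trivially and the momentum equation reduces to the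
pressure balance. Since `k√A − k√A₀` is constant, `∂ₓ(k√A₀) = ∂ₓ(k√A)`, and the balance becomes
the product-rule identity `∂ₓ(k A^{3/2}) = 3A (∂ₓ(k√A) − (2/3)√A ∂ₓk)`, in which `A₀` no longer
appears.
-/

open Real

theorem Real.rpow_three_halves_eq_mul_sqrt {a : ℝ} (ha : 0 < a) : a ^ (3 / 2 : ℝ) = a * √a := by
  rw [show (3 / 2 : ℝ) = 1 + 1 / 2 by norm_num, rpow_add ha, rpow_one, sqrt_eq_rpow]

theorem deriv_mul_rpow_three_halves {k A : ℝ → ℝ} {x : ℝ} (hk : DifferentiableAt ℝ k x)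
    (hA : DifferentiableAt ℝ A x) (hAx : 0 < A x) :
    deriv (fun y => k y * A y ^ (3 / 2 : ℝ)) x =
      3 * A x * (deriv (fun y => k y * √(A y)) x - 2 / 3 * √(A x) * deriv k x) := by
  have hsqrt : HasDerivAt (fun y => k y * √(A y)) _ x :=
    hk.hasDerivAt.mul (hA.hasDerivAt.sqrt hAx.ne')
  have hpow : HasDerivAt (fun y => k y * A y ^ (3 / 2 : ℝ)) _ x :=
    hk.hasDerivAt.mul (hA.hasDerivAt.rpow_const (Or.inl hAx.ne'))
  rw [hpow.deriv, hsqrt.deriv, rpow_three_halves_eq_mul_sqrt hAx,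
    show (3 / 2 : ℝ) - 1 = 1 / 2 by norm_num, ← sqrt_eq_rpow]
  have hs : 0 < √(A x) := sqrt_pos.mpr hAx
  field_simp
  rw [sq_sqrt hAx.le]
  ring

theorem blood_flow_man_at_eternal_rest_general
    (ρ : ℝ)
    (k A₀ : ℝ → ℝ) (hk : ContDiff ℝ 1 k)
    (A : ℝ → ℝ) (hA : ContDiff ℝ 1 A) (hApos : ∀ x, 0 < A x)
    (heq : ∃ C : ℝ, ∀ x,
      k x * Real.sqrt (A x) - k x * Real.sqrt (A₀ x) = C) :
    (∀ x t : ℝ, deriv (fun _ : ℝ => A x) t + deriv (fun _ : ℝ => (0 : ℝ)) x = 0) ∧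
      ∀ x, deriv (fun y => k y / (3 * Real.sqrt π * ρ) * A y ^ (3 / 2 : ℝ)) x =
        A x / (Real.sqrt π * ρ) *
          (deriv (fun y => k y * Real.sqrt (A₀ y)) x
            - 2 / 3 * Real.sqrt (A x) * deriv k x) := by
  obtain ⟨C, hC⟩ := heq
  refine ⟨fun x t => by simp, fun x => ?_⟩
  have hrest : (fun y => k y * √(A₀ y)) = fun y => k y * √(A y) - C :=
    funext fun y => by linarith [hC y]
  have hscale : (fun y => k y / (3 * √π * ρ) * A y ^ (3 / 2 : ℝ)) =
      fun y => (3 * √π * ρ)⁻¹ * (k y * A y ^ (3 / 2 : ℝ)) :=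
    funext fun y => by ring
  rw [hrest, deriv_sub_const, hscale, deriv_const_mul_field,
    deriv_mul_rpow_three_halves (hk.differentiable one_ne_zero x)
      (hA.differentiable one_ne_zero x) (hApos x)]
  ring

/-- The "man at eternal rest" equilibrium: if `k√A − k√A₀` is constant, then the
time-independent pair `(A, Q ≡ 0)` is an exact solution of the variable-stiffness
blood flow system. -/
theorem blood_flow_man_at_eternal_rest
    (ρ C_f : ℝ) (hρ : 0 < ρ) (hCf : 0 ≤ C_f)
    (k A₀ : ℝ → ℝ) (hk : ContDiff ℝ 1 k) (hA₀ : ContDiff ℝ 1 A₀)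
    (hkpos : ∀ x, 0 < k x) (hA₀pos : ∀ x, 0 < A₀ x)
    (A : ℝ → ℝ) (hA : ContDiff ℝ 1 A) (hApos : ∀ x, 0 < A x)
    (heq : ∃ C : ℝ, ∀ x,
      k x * Real.sqrt (A x) - k x * Real.sqrt (A₀ x) = C) :
    (∀ x t : ℝ, deriv (fun _ : ℝ => A x) t + deriv (fun _ : ℝ => (0 : ℝ)) x = 0) ∧
      ∀ x, deriv (fun y => k y / (3 * Real.sqrt π * ρ) * A y ^ (3 / 2 : ℝ)) x =
        A x / (Real.sqrt π * ρ) *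
          (deriv (fun y => k y * Real.sqrt (A₀ y)) x
            - 2 / 3 * Real.sqrt (A x) * deriv k x) :=
  blood_flow_man_at_eternal_rest_general ρ k A₀ hk A hA hApos heq
end

section
/- Let k_i, k_{i+1} > 0, A_i, A_{i+1} ≥ 0, A₀ᵢ, A₀_{i+1} ≥ 0, set 𝐀₀ⱼ = k_j√A₀ⱼ, Δ𝐀₀ = 𝐀₀_{i+1} − 𝐀₀ᵢ and k* = max(k_i, k_{i+1}), and define the hydrostatically reconstructed areas by √A_{i+1/2,L} = max(k_i√A_i + min(Δ𝐀₀, 0), 0)/k* and √A_{i+1/2,R} = max(k_{i+1}√A_{i+1} − max(Δ𝐀₀, 0), 0)/k*. Then 0 ≤ A_{i+1/2,L} ≤ A_i and 0 ≤ A_{i+1/2,R} ≤ A_{i+1}. -/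
open Real

/-- Nonnegativity and boundedness of the hydrostatically reconstructed areas for the
variable-stiffness blood flow system: `0 ≤ A_{i+1/2,L} ≤ A_i` and
`0 ≤ A_{i+1/2,R} ≤ A_{i+1}`. -/
theorem hydrostatic_reconstruction_bounds
    (ki ki1 Ai Ai1 A0i A0i1 : ℝ)
    (hki : 0 < ki) (hki1 : 0 < ki1)
    (hAi : 0 ≤ Ai) (hAi1 : 0 ≤ Ai1) (hA0i : 0 ≤ A0i) (hA0i1 : 0 ≤ A0i1)
    (ΔA0 kstar AL AR : ℝ)
    (hΔ : ΔA0 = ki1 * Real.sqrt A0i1 - ki * Real.sqrt A0i)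
    (hkstar : kstar = max ki ki1)
    (hAL : Real.sqrt AL = max (ki * Real.sqrt Ai + min ΔA0 0) 0 / kstar)
    (hAR : Real.sqrt AR = max (ki1 * Real.sqrt Ai1 - max ΔA0 0) 0 / kstar)
    (hALnn : 0 ≤ AL) (hARnn : 0 ≤ AR) :
    0 ≤ AL ∧ AL ≤ Ai ∧ 0 ≤ AR ∧ AR ≤ Ai1 := by
  have hks : 0 < kstar := by rw [hkstar]; exact lt_max_of_lt_left hki
  have hkiks : ki ≤ kstar := hkstar ▸ le_max_left _ _
  have hki1ks : ki1 ≤ kstar := hkstar ▸ le_max_right _ _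
  have hsAi : 0 ≤ Real.sqrt Ai := Real.sqrt_nonneg _
  have hsAi1 : 0 ≤ Real.sqrt Ai1 := Real.sqrt_nonneg _
  have hL : Real.sqrt AL ≤ Real.sqrt Ai := by
    rw [hAL, div_le_iff₀ hks]
    have h1 : ki * Real.sqrt Ai + min ΔA0 0 ≤ Real.sqrt Ai * kstar := by
      have := min_le_right ΔA0 0
      nlinarith [mul_le_mul_of_nonneg_right hkiks hsAi]
    exact max_le h1 (mul_nonneg hsAi hks.le)
  have hR : Real.sqrt AR ≤ Real.sqrt Ai1 := by
    rw [hAR, div_le_iff₀ hks]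
    have h1 : ki1 * Real.sqrt Ai1 - max ΔA0 0 ≤ Real.sqrt Ai1 * kstar := by
      have := le_max_right ΔA0 0
      nlinarith [mul_le_mul_of_nonneg_right hki1ks hsAi1]
    exact max_le h1 (mul_nonneg hsAi1 hks.le)
  refine ⟨hALnn, ?_, hARnn, ?_⟩
  · 
    
    calc AL = Real.sqrt AL ^ 2 := (Real.sq_sqrt hALnn).symm
      _ ≤ Real.sqrt Ai ^ 2 := pow_le_pow_left₀ (Real.sqrt_nonneg _) hL 2
      _ = Ai := Real.sq_sqrt hAi
  · calc AR = Real.sqrt AR ^ 2 := (Real.sq_sqrt hARnn).symm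
      _ ≤ Real.sqrt Ai1 ^ 2 := pow_le_pow_left₀ (Real.sqrt_nonneg _) hR 2
      _ = Ai1 := Real.sq_sqrt hAi1
end

section
/- Let k_i, k_{i+1} > 0, A_i, A_{i+1} ≥ 0, A₀ᵢ, A₀_{i+1} ≥ 0 and suppose the rest-equilibrium condition holds: k_i√A_i − k_i√A₀ᵢ = k_{i+1}√A_{i+1} − k_{i+1}√A₀_{i+1}. Then the hydrostatically reconstructed areas, defined with 𝐀₀ⱼ = k_j√A₀ⱼ, Δ𝐀₀ = 𝐀₀_{i+1} − 𝐀₀ᵢ, k* = max(k_i, k_{i+1}), √A_{i+1/2,L} = max(k_i√A_i + min(Δ𝐀₀, 0), 0)/k* and √A_{i+1/2,R} = max(k_{i+1}√A_{i+1} − max(Δ𝐀₀, 0), 0)/k*, are equal: A_{i+1/2,L} = A_{i+1/2,R} = (max(min(𝐀₀ᵢ, 𝐀₀_{i+1}) + C, 0)/k*)², where C is the common value of k_j√A_j − 𝐀₀ⱼ. -/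
open Real

/-- At a rest equilibrium `k_i√A_i − k_i√A₀ᵢ = k_{i+1}√A_{i+1} − k_{i+1}√A₀_{i+1} = C`,
the hydrostatically reconstructed areas on both sides of the interface coincide and
equal `(max(min(𝐀₀ᵢ, 𝐀₀_{i+1}) + C, 0)/k*)²`. -/
theorem hydrostatic_reconstruction_well_balanced
    (ki ki1 Ai Ai1 A0i A0i1 : ℝ)
    (hki : 0 < ki) (hki1 : 0 < ki1)
    (hAi : 0 ≤ Ai) (hAi1 : 0 ≤ Ai1) (hA0i : 0 ≤ A0i) (hA0i1 : 0 ≤ A0i1)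
    (C : ℝ)
    (hC : ki * Real.sqrt Ai - ki * Real.sqrt A0i = C)
    (heq : ki * Real.sqrt Ai - ki * Real.sqrt A0i
        = ki1 * Real.sqrt Ai1 - ki1 * Real.sqrt A0i1)
    (AA0i AA0i1 ΔA0 kstar AL AR : ℝ)
    (hAA0i : AA0i = ki * Real.sqrt A0i)
    (hAA0i1 : AA0i1 = ki1 * Real.sqrt A0i1)
    (hΔ : ΔA0 = AA0i1 - AA0i)
    (hkstar : kstar = max ki ki1)
    (hAL : AL = (max (ki * Real.sqrt Ai + min ΔA0 0) 0 / kstar) ^ 2)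
    (hAR : AR = (max (ki1 * Real.sqrt Ai1 - max ΔA0 0) 0 / kstar) ^ 2) :
    AL = (max (min AA0i AA0i1 + C) 0 / kstar) ^ 2 ∧
      AR = (max (min AA0i AA0i1 + C) 0 / kstar) ^ 2 := by
  have h1 : ki * Real.sqrt Ai = AA0i + C := by rw [hAA0i]; linarith
  have h2 : ki1 * Real.sqrt Ai1 = AA0i1 + C := by rw [hAA0i1]; linarith
  constructor
  · rw [hAL, h1, hΔ]
    rcases le_total AA0i AA0i1 with h | h <;>
      [rw [min_eq_left h, min_eq_right (by linarith : (0:ℝ) ≤ AA0i1 - AA0i)];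
       rw [min_eq_right h, min_eq_left (by linarith : AA0i1 - AA0i ≤ (0:ℝ))]] <;>
      ring_nf
  · rw [hAR, h2, hΔ]
    rcases le_total AA0i AA0i1 with h | h <;>
      [rw [min_eq_left h, max_eq_left (by linarith : (0:ℝ) ≤ AA0i1 - AA0i)];
       rw [min_eq_right h, max_eq_right (by linarith : AA0i1 - AA0i ≤ (0:ℝ))]] <;>
      ring_nf
end
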